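/- Let J₁ and J₂ be differentiable functions on ℝ^d such that J₁ is λ-strongly convex, the difference d(β) = J₂(β) - J₁(β) has gradient bounded by ‖∇d(β)‖_2 ≤ G for all β, and let β₁* and β₂* be critical points (minimizers with vanishing gradient) of J₁ and J₂ respectively. Then ‖β₁* - β₂*‖_2 ≤ G/λ. -/

import Mathlib

open scoped RealInnerProductSpace

private lemma grad_mono {d : ℕ} {h : EuclideanSpace ℝ (Fin d) → ℝ}
    (hdiff : Differentiable ℝ h) (hconv : ConvexOn ℝ Set.univ h)
    (x y : EuclideanSpace ℝ (Fin d)) :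
    fderiv ℝ h x (y - x) ≤ fderiv ℝ h y (y - x) := by
  set c : ℝ → EuclideanSpace ℝ (Fin d) := fun t => AffineMap.lineMap x y t with hc
  have hcder : ∀ t : ℝ, HasDerivAt c (y - x) t := by
    intro t
    have : HasDerivAt (fun t : ℝ => t • (y - x) + x) (y - x) t := by
      simpa using ((hasDerivAt_id t).smul_const (y - x)).add_const x
    refine this.congr_deriv rfl |>.congr_of_eventuallyEq ?_
    filter_upwards with s
    simp only [hc, AffineMap.lineMap_apply_module]
    module
  have hφder : ∀ t : ℝ, HasDerivAt (h ∘ c) (fderiv ℝ h (c t) (y - x)) t := fun t =>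
    (hdiff (c t)).hasFDerivAt.comp_hasDerivAt t (hcder t)
  have hφconv : ConvexOn ℝ Set.univ (h ∘ c) := by
    have := hconv.comp_affineMap (AffineMap.lineMap x y)
    simpa [hc] using this
  have hmono := hφconv.monotoneOn_deriv (fun t _ => (hφder t).differentiableAt)
  have h01 := hmono (Set.mem_univ 0) (Set.mem_univ 1) zero_le_one
  rw [(hφder 0).deriv, (hφder 1).deriv] at h01
  simpa [hc, AffineMap.lineMap_apply_zero, AffineMap.lineMap_apply_one] using h01

private lemma fderiv_eq_inner_gradient {d : ℕ} {f : EuclideanSpace ℝ (Fin d) → ℝ}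
    (hf : Differentiable ℝ f) (x v : EuclideanSpace ℝ (Fin d)) :
    fderiv ℝ f x v = ⟪gradient f x, v⟫ := by
  have := (hf x).hasGradientAt
  rw [hasGradientAt_iff_hasFDerivAt] at this
  rw [this.fderiv, InnerProductSpace.toDual_apply_apply]

theorem argmin_stability (d : ℕ) (lam G : ℝ) (hlam : 0 < lam) (hG : 0 ≤ G)
    (J₁ J₂ : EuclideanSpace ℝ (Fin d) → ℝ)
    (hdiff₁ : Differentiable ℝ J₁) (hdiff₂ : Differentiable ℝ J₂)
    (hconv : ConvexOn ℝ Set.univ (fun β => J₁ β - lam / 2 * ‖β‖ ^ 2))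
    (hgradBound : ∀ β, ‖gradient (fun b => J₂ b - J₁ b) β‖ ≤ G)
    (β₁ β₂ : EuclideanSpace ℝ (Fin d))
    (hmin₁ : ∀ β, J₁ β₁ ≤ J₁ β) (hmin₂ : ∀ β, J₂ β₂ ≤ J₂ β)
    (hcrit₁ : gradient J₁ β₁ = 0) (hcrit₂ : gradient J₂ β₂ = 0) :
    ‖β₁ - β₂‖ ≤ G / lam := by
  set v : EuclideanSpace ℝ (Fin d) := β₂ - β₁ with hv
  have hnormsq : Differentiable ℝ (fun β : EuclideanSpace ℝ (Fin d) => lam / 2 * ‖β‖ ^ 2) :=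
    (((contDiff_norm_sq ℝ (n := 1)).differentiable one_ne_zero)).const_mul _
  have hdiffh : Differentiable ℝ (fun β : EuclideanSpace ℝ (Fin d) => J₁ β - lam / 2 * ‖β‖ ^ 2) :=
    hdiff₁.sub hnormsq
  -- fderiv of lam/2 * ‖·‖² at z applied to v is lam * ⟪z, v⟫
  have hfd_sq : ∀ z : EuclideanSpace ℝ (Fin d),
      fderiv ℝ (fun β : EuclideanSpace ℝ (Fin d) => lam / 2 * ‖β‖ ^ 2) z v = lam * ⟪z, v⟫ := by
    intro z
    have h1 : (fun β : EuclideanSpace ℝ (Fin d) => lam / 2 * ‖β‖ ^ 2)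
        = fun β : EuclideanSpace ℝ (Fin d) => lam / 2 * ⟪β, β⟫ := by
      funext β; rw [real_inner_self_eq_norm_sq]
    rw [h1, fderiv_const_mul, ContinuousLinearMap.smul_apply,
      fderiv_inner_apply ℝ differentiableAt_fun_id differentiableAt_fun_id]
    · simp only [fderiv_id', ContinuousLinearMap.coe_id', id_eq, smul_eq_mul,
        real_inner_comm v z]
      ring
    · exact differentiableAt_fun_id.inner ℝ differentiableAt_fun_id
  have hfdh : ∀ z : EuclideanSpace ℝ (Fin d),
      fderiv ℝ (fun β : EuclideanSpace ℝ (Fin d) => J₁ β - lam / 2 * ‖β‖ ^ 2) z v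
        = fderiv ℝ J₁ z v - lam * ⟪z, v⟫ := by
    intro z
    rw [fderiv_fun_sub (hdiff₁ z) (hnormsq z)]
    simp [hfd_sq z]
  have key := grad_mono hdiffh hconv β₁ β₂
  rw [hfdh, hfdh] at key
  -- fderiv J₁ β₁ v = 0
  have h1 : fderiv ℝ J₁ β₁ v = 0 := by
    rw [fderiv_eq_inner_gradient hdiff₁, hcrit₁, inner_zero_left]
  -- fderiv J₁ β₂ v = -⟪g, v⟫ where g = gradient (J₂ - J₁) β₂
  have hdiffd : Differentiable ℝ (fun b => J₂ b - J₁ b) := hdiff₂.sub hdiff₁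
  have h2 : fderiv ℝ J₁ β₂ v = - ⟪gradient (fun b => J₂ b - J₁ b) β₂, v⟫ := by
    have : fderiv ℝ (fun b => J₂ b - J₁ b) β₂ v = fderiv ℝ J₂ β₂ v - fderiv ℝ J₁ β₂ v := by
      rw [fderiv_fun_sub (hdiff₂ β₂) (hdiff₁ β₂)]; simp
    rw [fderiv_eq_inner_gradient hdiffd] at this
    rw [fderiv_eq_inner_gradient hdiff₂, hcrit₂, inner_zero_left] at this
    linarith
  have hkey2 : lam * ‖v‖ ^ 2 ≤ G * ‖v‖ := by
    have hinner : lam * ⟪β₂ - β₁, v⟫ ≤ fderiv ℝ J₁ β₂ v - fderiv ℝ J₁ β₁ v := by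
      rw [inner_sub_left]; nlinarith [key]
    rw [h1, h2, ← hv, real_inner_self_eq_norm_sq] at hinner
    have habs : - ⟪gradient (fun b => J₂ b - J₁ b) β₂, v⟫ ≤ G * ‖v‖ := by
      have := abs_real_inner_le_norm (gradient (fun b => J₂ b - J₁ b) β₂) v
      have hb := hgradBound β₂
      nlinarith [neg_abs_le (⟪gradient (fun b => J₂ b - J₁ b) β₂, v⟫), norm_nonneg v,
        norm_nonneg (gradient (fun b => J₂ b - J₁ b) β₂)]
    linarith
  have hnv : ‖β₁ - β₂‖ = ‖v‖ := by rw [hv, norm_sub_rev]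
  rw [hnv]
  rcases eq_or_lt_of_le (norm_nonneg v) with h0 | h0
  · rw [← h0]; positivity
  · rw [le_div_iff₀ hlam]
    nlinarith
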